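/- arXiv:2412.04777 — 5 statements merged into one kernel-verified Lean document; each statement's English description precedes it below -/
import Mathlib

section
/- Let {A_α}_{α∈I} be a nonempty family of real numbers with sup_α A_α ≥ 0 ≥ inf_α A_α, and suppose the supremum and infimum are finite. Then inf_{λ∈ℝ} max{ sup_α |A_α + λ|, |λ| } = (1/2)(sup_α A_α − inf_α A_α). -/
/-!
With `M = sup A` and `m = inf A`, one has `sup_α |A α + l| = max (M + l) (-(m + l))`, which is at
least the average `(M - m) / 2` of its two arguments. The midpoint shift `l = -(M + m) / 2` attains
this bound, and there `|l| ≤ (M - m) / 2` precisely because `m ≤ 0 ≤ M`.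
-/

open Set

theorem ciSup_abs_eq_max {ι α : Type*} [Nonempty ι] [ConditionallyCompleteLinearOrder α]
    [AddCommGroup α] [IsOrderedAddMonoid α] {f : ι → α}
    (hf : BddAbove (range f)) (hf' : BddBelow (range f)) :
    ⨆ i, |f i| = max (⨆ i, f i) (-⨅ i, f i) := by
  refine ciSup_eq_of_forall_le_of_forall_lt_exists_gt
    (fun i => abs_eq_max_neg.trans_le <| max_le_max (le_ciSup hf i) (neg_le_neg (ciInf_le hf' i)))
    fun w hw => ?_
  rcases lt_max_iff.1 hw with hw | hw
  · obtain ⟨i, hi⟩ := exists_lt_of_lt_ciSup hw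
    exact ⟨i, hi.trans_le (le_abs_self _)⟩
  · obtain ⟨i, hi⟩ := exists_lt_of_ciInf_lt (lt_neg_of_lt_neg hw)
    exact ⟨i, (lt_neg_of_lt_neg hi).trans_le (neg_le_abs _)⟩

theorem ciSup_abs_add_eq_max {ι α : Type*} [Nonempty ι] [ConditionallyCompleteLinearOrder α]
    [AddCommGroup α] [IsOrderedAddMonoid α] {f : ι → α}
    (hf : BddAbove (range f)) (hf' : BddBelow (range f)) (c : α) :
    ⨆ i, |f i + c| = max ((⨆ i, f i) + c) (-((⨅ i, f i) + c)) := by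
  have hmono : Monotone (· + c) := fun _ _ h => add_le_add_left h c
  rw [ciSup_abs_eq_max (hf.range_comp_left hmono) (hf'.range_comp_left hmono), ciSup_add hf,
    ciInf_add hf']

theorem stmt_0 {I : Type*} [Nonempty I] (A : I → ℝ)
    (hbdd : BddAbove (Set.range A)) (hbdd' : BddBelow (Set.range A))
    (hsup : 0 ≤ ⨆ α, A α) (hinf : ⨅ α, A α ≤ 0) :
    (⨅ l : ℝ, max (⨆ α, |A α + l|) |l|) = ((⨆ α, A α) - ⨅ α, A α) / 2 := by
  set M := ⨆ α, A α
  set m := ⨅ α, A α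
  have hsupAbs (l : ℝ) : ⨆ α, |A α + l| = max (M + l) (-(m + l)) :=
    ciSup_abs_add_eq_max hbdd hbdd' l
  have hlower (l : ℝ) : (M - m) / 2 ≤ max (⨆ α, |A α + l|) |l| := by
    rw [hsupAbs]
    linarith [le_max_left (M + l) (-(m + l)), le_max_right (M + l) (-(m + l)),
      le_max_left (max (M + l) (-(m + l))) |l|]
  have hmid : max (⨆ α, |A α + -(M + m) / 2|) |-(M + m) / 2| ≤ (M - m) / 2 := by
    rw [hsupAbs]
    exact max_le (max_le (by linarith) (by linarith)) (abs_le.2 ⟨by linarith, by linarith⟩)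
  exact le_antisymm (ciInf_le_of_le ⟨_, forall_mem_range.2 hlower⟩ _ hmid) (le_ciInf hlower)
end

section
/- Let (X,d) be a metric space and γ : [0,1] → X an injective curve such that for all 0 ≤ t₁ < t₂ < t₃ ≤ 1 one has d(γ(t₁),γ(t₃)) = d(γ(t₁),γ(t₂)) + d(γ(t₂),γ(t₃)), and assume γ is continuous with d(γ(0),γ(1)) > 0. Then there exists a reparametrization γ̃ = γ ∘ G of γ (with G : [0,1] → [0,1] a homeomorphism fixing 0 and 1) which is a geodesic, i.e. d(γ̃(s₁),γ̃(s₂)) = |s₁ − s₂| · d(γ̃(0),γ̃(1)) for all s₁,s₂ ∈ [0,1]. -/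
/-! Additivity turns `φ t = dist (γ 0) (γ t)` into an arc-length function: `dist (γ s) (γ t) =
|φ s - φ t|` on `[0, 1]`, and injectivity of `γ` makes `φ` strictly increasing. Being continuous,
`φ / φ 1` is then an increasing homeomorphism of `[0, 1]`, and reparametrizing `γ` by its inverse,
i.e. by normalized arc length, gives a geodesic. -/

open Set

universe u v

section InverseOnIcc

variable {α : Type u} {β : Type v} [ConditionallyCompleteLinearOrder α] [DenselyOrdered α]
  [TopologicalSpace α] [OrderTopology α] [LinearOrder β] [TopologicalSpace β] [OrderTopology β]

theorem StrictMonoOn.exists_continuous_invOn_Icc {f : α → β} {a b : α} (hab : a ≤ b)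
    (hf : StrictMonoOn f (Icc a b)) (hfc : ContinuousOn f (Icc a b)) :
    ∃ g : β → α, Continuous g ∧ StrictMonoOn g (Icc (f a) (f b)) ∧
      g '' Icc (f a) (f b) = Icc a b ∧ InvOn g f (Icc a b) (Icc (f a) (f b)) := by
  have hmaps : MapsTo f (Icc a b) (Icc (f a) (f b)) := fun t ht =>
    ⟨hf.monotoneOn (left_mem_Icc.2 hab) ht ht.1, hf.monotoneOn ht (right_mem_Icc.2 hab) ht.2⟩
  have hsurj : SurjOn f (Icc a b) (Icc (f a) (f b)) :=
    hfc.surjOn_Icc (left_mem_Icc.2 hab) (right_mem_Icc.2 hab)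
  set e : Icc a b ≃o Icc (f a) (f b) :=
    StrictMono.orderIsoOfSurjective (hmaps.restrict f _ _) (fun s t hst => hf s.2 t.2 hst)
      (hmaps.restrict_surjective_iff.2 hsurj)
  set g := IccExtend (hmaps (left_mem_Icc.2 hab)).2 (Subtype.val ∘ e.symm)
  have hg : ∀ s (hs : s ∈ Icc (f a) (f b)), g s = e.symm ⟨s, hs⟩ := fun s hs =>
    IccExtend_of_mem _ _ hs
  have hinv : InvOn g f (Icc a b) (Icc (f a) (f b)) := by
    refine ⟨fun t ht => ?_, fun s hs => ?_⟩
    · rw [hg _ (hmaps ht)]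
      exact congrArg Subtype.val (e.symm_apply_apply ⟨t, ht⟩)
    · rw [hg _ hs]
      exact congrArg Subtype.val (e.apply_symm_apply ⟨s, hs⟩)
  refine ⟨g, (continuous_subtype_val.comp e.symm.continuous).Icc_extend', ?_, ?_, hinv⟩
  · intro s hs t ht hst
    rw [hg s hs, hg t ht]
    exact e.symm.strictMono hst
  · rw [← hsurj.image_eq_of_mapsTo hmaps, hinv.1.image_image]

section AdditiveCurve

variable {X : Type u} {γ : ℝ → X}

theorem dist_eq_add_of_le [PseudoMetricSpace X]
    (hadd : ∀ t₁ t₂ t₃ : ℝ, 0 ≤ t₁ → t₁ < t₂ → t₂ < t₃ → t₃ ≤ 1 →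
      dist (γ t₁) (γ t₃) = dist (γ t₁) (γ t₂) + dist (γ t₂) (γ t₃))
    {t₁ t₂ t₃ : ℝ} (h₁ : 0 ≤ t₁) (h₁₂ : t₁ ≤ t₂) (h₂₃ : t₂ ≤ t₃) (h₃ : t₃ ≤ 1) :
    dist (γ t₁) (γ t₃) = dist (γ t₁) (γ t₂) + dist (γ t₂) (γ t₃) := by
  rcases h₁₂.eq_or_lt with rfl | h₁₂
  · simp
  rcases h₂₃.eq_or_lt with rfl | h₂₃
  · simp
  exact hadd t₁ t₂ t₃ h₁ h₁₂ h₂₃ h₃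

theorem dist_eq_abs_sub_dist_left [PseudoMetricSpace X]
    (hadd : ∀ t₁ t₂ t₃ : ℝ, 0 ≤ t₁ → t₁ < t₂ → t₂ < t₃ → t₃ ≤ 1 →
      dist (γ t₁) (γ t₃) = dist (γ t₁) (γ t₂) + dist (γ t₂) (γ t₃))
    {s t : ℝ} (hs : s ∈ Icc (0 : ℝ) 1) (ht : t ∈ Icc (0 : ℝ) 1) :
    dist (γ s) (γ t) = |dist (γ 0) (γ s) - dist (γ 0) (γ t)| := by
  wlog hst : s ≤ t generalizing s t
  · rw [dist_comm, abs_sub_comm]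
    exact this ht hs (le_of_not_ge hst)
  rw [dist_eq_add_of_le hadd le_rfl hs.1 hst ht.2, abs_sub_comm, add_sub_cancel_left,
    abs_of_nonneg dist_nonneg]

theorem strictMonoOn_dist_left [MetricSpace X] (hinj : InjOn γ (Icc 0 1))
    (hadd : ∀ t₁ t₂ t₃ : ℝ, 0 ≤ t₁ → t₁ < t₂ → t₂ < t₃ → t₃ ≤ 1 →
      dist (γ t₁) (γ t₃) = dist (γ t₁) (γ t₂) + dist (γ t₂) (γ t₃)) :
    StrictMonoOn (fun t => dist (γ 0) (γ t)) (Icc 0 1) := by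
  intro s hs t ht hst
  have hne : γ s ≠ γ t := fun h => hst.ne (hinj hs ht h)
  dsimp only
  rw [dist_eq_add_of_le hadd le_rfl hs.1 hst.le ht.2]
  exact lt_add_of_pos_right _ (dist_pos.2 hne)

end AdditiveCurve

theorem stmt_1 {X : Type*} [MetricSpace X] (γ : ℝ → X)
    (hcont : ContinuousOn γ (Icc 0 1))
    (hinj : InjOn γ (Icc 0 1))
    (hadd : ∀ t₁ t₂ t₃ : ℝ, 0 ≤ t₁ → t₁ < t₂ → t₂ < t₃ → t₃ ≤ 1 →
      dist (γ t₁) (γ t₃) = dist (γ t₁) (γ t₂) + dist (γ t₂) (γ t₃))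
    (hpos : 0 < dist (γ 0) (γ 1)) :
    ∃ G : ℝ → ℝ, G 0 = 0 ∧ G 1 = 1 ∧
      StrictMonoOn G (Icc 0 1) ∧ ContinuousOn G (Icc 0 1) ∧
      G '' (Icc 0 1) = Icc 0 1 ∧
      ∀ s₁ ∈ Icc (0:ℝ) 1, ∀ s₂ ∈ Icc (0:ℝ) 1,
        dist (γ (G s₁)) (γ (G s₂)) = |s₁ - s₂| * dist (γ (G 0)) (γ (G 1)) := by
  have hD : dist (γ 0) (γ 1) ≠ 0 := hpos.ne'
  have hmono : StrictMonoOn (fun t => dist (γ 0) (γ t) / dist (γ 0) (γ 1)) (Icc 0 1) :=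
    fun s hs t ht hst => div_lt_div_of_pos_right (strictMonoOn_dist_left hinj hadd hs ht hst) hpos
  have hfc : ContinuousOn (fun t => dist (γ 0) (γ t) / dist (γ 0) (γ 1)) (Icc 0 1) :=
    (continuous_const.dist continuous_id |>.comp_continuousOn hcont).div_const _
  obtain ⟨G, hGc, hGmono, hGimage, hGleft, hGright⟩ :=
    hmono.exists_continuous_invOn_Icc zero_le_one hfc
  simp only [dist_self, zero_div, div_self hD] at hGmono hGimage hGleft hGright
  have hG0 : G 0 = 0 := by simpa using hGleft (left_mem_Icc.2 zero_le_one)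
  have hG1 : G 1 = 1 := by simpa [div_self hD] using hGleft (right_mem_Icc.2 zero_le_one)
  have hdist : ∀ s ∈ Icc (0 : ℝ) 1, dist (γ 0) (γ (G s)) = s * dist (γ 0) (γ 1) :=
    fun s hs => (div_eq_iff hD).1 (hGright hs)
  have hGmem : ∀ s ∈ Icc (0 : ℝ) 1, G s ∈ Icc (0 : ℝ) 1 := fun s hs =>
    hGimage ▸ mem_image_of_mem G hs
  refine ⟨G, hG0, hG1, hGmono, hGc.continuousOn, hGimage, fun s₁ h₁ s₂ h₂ => ?_⟩
  rw [dist_eq_abs_sub_dist_left hadd (hGmem s₁ h₁) (hGmem s₂ h₂), hdist s₁ h₁, hdist s₂ h₂,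
    hG0, hG1, ← sub_mul, abs_mul, abs_of_pos hpos]
end InverseOnIcc
end

section
/- Define d_ℤ(τ₁,τ₂) := sup_{s₁,s₂ ∈ ℤ} log( (|τ₁ − s₂||τ₂ − s₁|) / (|τ₂ − s₂||τ₁ − s₁|) ) for τ₁,τ₂ ∈ ℍ. Then d_ℤ is a metric on ℍ: it is nonnegative, symmetric, vanishes exactly on the diagonal, and satisfies the triangle inequality. -/
/-!
Writing `f(s) = log (|τ₁ - s| / |τ₂ - s|)`, the summand of `dZ τ₁ τ₂` is `f(s₂) - f(s₁)`, so
`dZ τ₁ τ₂ = sup f + sup (-f)`, and `-f` is the `f` of the swapped pair. Hence `dZ` is the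
symmetrisation of the one-sided quantity `sup_s log (|τ₁ - s| / |τ₂ - s|)`, which is finite on `ℍ`
and subadditive because the quotients multiply. It vanishes on `(τ₁, τ₂)` only if `f` is constant,
and already `f(1) = f(0) = f(-1)` forces `τ₁ = τ₂`.
-/

noncomputable def dZ (τ₁ τ₂ : ℂ) : ℝ :=
  ⨆ s₁ : ℤ, ⨆ s₂ : ℤ,
    Real.log ((‖τ₁ - (s₂ : ℂ)‖ * ‖τ₂ - (s₁ : ℂ)‖) /
      (‖τ₂ - (s₂ : ℂ)‖ * ‖τ₁ - (s₁ : ℂ)‖))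

open Set

noncomputable def logNormRatio (τ₁ τ₂ : ℂ) (s : ℤ) : ℝ :=
  Real.log ‖τ₁ - s‖ - Real.log ‖τ₂ - s‖

noncomputable def supLogNormRatio (τ₁ τ₂ : ℂ) : ℝ :=
  ⨆ s : ℤ, logNormRatio τ₁ τ₂ s

section

variable {τ τ₁ τ₂ τ₃ : ℂ}

lemma im_le_norm_sub_intCast (τ : ℂ) (s : ℤ) : τ.im ≤ ‖τ - s‖ := by
  simpa using Complex.im_le_norm (τ - s)

lemma norm_sub_intCast_pos (hτ : 0 < τ.im) (s : ℤ) : 0 < ‖τ - s‖ :=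
  hτ.trans_le (im_le_norm_sub_intCast τ s)

lemma logNormRatio_add (τ₁ τ₂ τ₃ : ℂ) (s : ℤ) :
    logNormRatio τ₁ τ₂ s + logNormRatio τ₂ τ₃ s = logNormRatio τ₁ τ₃ s := by
  unfold logNormRatio; ring

lemma logNormRatio_swap (τ₁ τ₂ : ℂ) (s : ℤ) :
    logNormRatio τ₂ τ₁ s = -logNormRatio τ₁ τ₂ s := by
  unfold logNormRatio; ring

lemma logNormRatio_le (h₁ : 0 < τ₁.im) (h₂ : 0 < τ₂.im) (s : ℤ) :
    logNormRatio τ₁ τ₂ s ≤ Real.log (1 + ‖τ₁ - τ₂‖ / τ₂.im) := by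
  have hpos₁ := norm_sub_intCast_pos h₁ s
  have hpos₂ := norm_sub_intCast_pos h₂ s
  rw [logNormRatio, ← Real.log_div hpos₁.ne' hpos₂.ne']
  refine Real.log_le_log (by positivity) ?_
  calc ‖τ₁ - s‖ / ‖τ₂ - s‖ ≤ (‖τ₂ - s‖ + ‖τ₁ - τ₂‖) / ‖τ₂ - s‖ := by
        gcongr
        simpa using norm_add_le (τ₂ - s) (τ₁ - τ₂)
    _ = 1 + ‖τ₁ - τ₂‖ / ‖τ₂ - s‖ := by field_simp
    _ ≤ 1 + ‖τ₁ - τ₂‖ / τ₂.im := by gcongr; exact im_le_norm_sub_intCast τ₂ s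

lemma bddAbove_range_logNormRatio (h₁ : 0 < τ₁.im) (h₂ : 0 < τ₂.im) :
    BddAbove (range (logNormRatio τ₁ τ₂)) :=
  ⟨_, forall_mem_range.2 (logNormRatio_le h₁ h₂)⟩

lemma logNormRatio_le_supLogNormRatio (h₁ : 0 < τ₁.im) (h₂ : 0 < τ₂.im) (s : ℤ) :
    logNormRatio τ₁ τ₂ s ≤ supLogNormRatio τ₁ τ₂ :=
  le_ciSup (bddAbove_range_logNormRatio h₁ h₂) s

lemma neg_supLogNormRatio_le_logNormRatio (h₁ : 0 < τ₁.im) (h₂ : 0 < τ₂.im) (s : ℤ) :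
    -supLogNormRatio τ₂ τ₁ ≤ logNormRatio τ₁ τ₂ s := by
  rw [neg_le, ← logNormRatio_swap]
  exact logNormRatio_le_supLogNormRatio h₂ h₁ s

lemma supLogNormRatio_le_add (h₁ : 0 < τ₁.im) (h₂ : 0 < τ₂.im) (h₃ : 0 < τ₃.im) :
    supLogNormRatio τ₁ τ₃ ≤ supLogNormRatio τ₁ τ₂ + supLogNormRatio τ₂ τ₃ :=
  ciSup_le fun s => logNormRatio_add τ₁ τ₂ τ₃ s ▸
    add_le_add (logNormRatio_le_supLogNormRatio h₁ h₂ s) (logNormRatio_le_supLogNormRatio h₂ h₃ s)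

lemma dZ_eq_supLogNormRatio_add (h₁ : 0 < τ₁.im) (h₂ : 0 < τ₂.im) :
    dZ τ₁ τ₂ = supLogNormRatio τ₁ τ₂ + supLogNormRatio τ₂ τ₁ := by
  have hsummand : ∀ s₁ s₂ : ℤ,
      Real.log ((‖τ₁ - s₂‖ * ‖τ₂ - s₁‖) / (‖τ₂ - s₂‖ * ‖τ₁ - s₁‖)) =
        logNormRatio τ₂ τ₁ s₁ + logNormRatio τ₁ τ₂ s₂ := by
    intro s₁ s₂
    have := norm_sub_intCast_pos h₁ s₁
    have := norm_sub_intCast_pos h₁ s₂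
    have := norm_sub_intCast_pos h₂ s₁
    have := norm_sub_intCast_pos h₂ s₂
    rw [Real.log_div (by positivity) (by positivity), Real.log_mul (by positivity) (by positivity),
      Real.log_mul (by positivity) (by positivity), logNormRatio, logNormRatio]
    ring
  simp_rw [dZ, hsummand, ← add_ciSup (bddAbove_range_logNormRatio h₁ h₂),
    ← ciSup_add (bddAbove_range_logNormRatio h₂ h₁), supLogNormRatio, add_comm]

lemma dZ_nonneg (h₁ : 0 < τ₁.im) (h₂ : 0 < τ₂.im) : 0 ≤ dZ τ₁ τ₂ := by
  rw [dZ_eq_supLogNormRatio_add h₁ h₂]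
  linarith [logNormRatio_le_supLogNormRatio h₁ h₂ 0, neg_supLogNormRatio_le_logNormRatio h₁ h₂ 0]

lemma dZ_comm (h₁ : 0 < τ₁.im) (h₂ : 0 < τ₂.im) : dZ τ₁ τ₂ = dZ τ₂ τ₁ := by
  rw [dZ_eq_supLogNormRatio_add h₁ h₂, dZ_eq_supLogNormRatio_add h₂ h₁, add_comm]

lemma dZ_triangle (h₁ : 0 < τ₁.im) (h₂ : 0 < τ₂.im) (h₃ : 0 < τ₃.im) :
    dZ τ₁ τ₃ ≤ dZ τ₁ τ₂ + dZ τ₂ τ₃ := by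
  rw [dZ_eq_supLogNormRatio_add h₁ h₃, dZ_eq_supLogNormRatio_add h₁ h₂,
    dZ_eq_supLogNormRatio_add h₂ h₃]
  linarith [supLogNormRatio_le_add h₁ h₂ h₃, supLogNormRatio_le_add h₃ h₂ h₁]

lemma dZ_self (τ : ℂ) : dZ τ τ = 0 := by
  simp [dZ, mul_comm]

lemma logNormRatio_eq_of_dZ_eq_zero (h₁ : 0 < τ₁.im) (h₂ : 0 < τ₂.im) (h : dZ τ₁ τ₂ = 0)
    (s t : ℤ) : logNormRatio τ₁ τ₂ s = logNormRatio τ₁ τ₂ t := by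
  have hsum := dZ_eq_supLogNormRatio_add h₁ h₂
  have := logNormRatio_le_supLogNormRatio h₁ h₂ s
  have := logNormRatio_le_supLogNormRatio h₁ h₂ t
  have := neg_supLogNormRatio_le_logNormRatio h₁ h₂ s
  have := neg_supLogNormRatio_le_logNormRatio h₁ h₂ t
  linarith

lemma norm_sub_mul_norm_eq_of_logNormRatio_eq (h₁ : 0 < τ₁.im) (h₂ : 0 < τ₂.im) {s : ℤ}
    (h : logNormRatio τ₁ τ₂ s = logNormRatio τ₁ τ₂ 0) :
    ‖τ₁ - s‖ * ‖τ₂‖ = ‖τ₂ - s‖ * ‖τ₁‖ := by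
  have hpos₁ := norm_sub_intCast_pos h₁ s
  have hpos₂ := norm_sub_intCast_pos h₂ s
  have hτ₁ : 0 < ‖τ₁‖ := by simpa using norm_sub_intCast_pos h₁ 0
  have hτ₂ : 0 < ‖τ₂‖ := by simpa using norm_sub_intCast_pos h₂ 0
  refine Real.log_injOn_pos (mem_Ioi.2 (by positivity)) (mem_Ioi.2 (by positivity)) ?_
  simp only [logNormRatio, Int.cast_zero, sub_zero] at h
  rw [Real.log_mul hpos₁.ne' hτ₂.ne', Real.log_mul hpos₂.ne' hτ₁.ne']
  linarith

lemma eq_of_norm_sub_mul_norm_eq (h₁ : 0 < τ₁.im) (h₂ : 0 < τ₂.im)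
    (hone : ‖τ₁ - 1‖ * ‖τ₂‖ = ‖τ₂ - 1‖ * ‖τ₁‖)
    (hnegOne : ‖τ₁ + 1‖ * ‖τ₂‖ = ‖τ₂ + 1‖ * ‖τ₁‖) : τ₁ = τ₂ := by
  -- Squared, the sum of the two identities is `|τ₁|² = |τ₂|²` and their difference is
  -- `Re τ₁ |τ₂|² = Re τ₂ |τ₁|²`.
  have hone' := congrArg (· ^ 2) hone
  have hnegOne' := congrArg (· ^ 2) hnegOne
  simp only [mul_pow, Complex.sq_norm, Complex.normSq_apply, Complex.sub_re, Complex.sub_im,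
    Complex.add_re, Complex.add_im, Complex.one_re, Complex.one_im] at hone' hnegOne'
  have hnormSq : τ₁.re * τ₁.re + τ₁.im * τ₁.im = τ₂.re * τ₂.re + τ₂.im * τ₂.im := by
    linarith
  have hre : τ₁.re = τ₂.re := by
    have hpos : 0 < τ₁.re * τ₁.re + τ₁.im * τ₁.im := by nlinarith
    refine mul_right_cancel₀ hpos.ne' ?_
    nlinarith
  have him : τ₁.im = τ₂.im := by nlinarith
  exact Complex.ext hre him

lemma dZ_eq_zero_iff (h₁ : 0 < τ₁.im) (h₂ : 0 < τ₂.im) : dZ τ₁ τ₂ = 0 ↔ τ₁ = τ₂ := by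
  refine ⟨fun h => ?_, by rintro rfl; exact dZ_self τ₁⟩
  have hratio (s : ℤ) := norm_sub_mul_norm_eq_of_logNormRatio_eq h₁ h₂
    (logNormRatio_eq_of_dZ_eq_zero h₁ h₂ h s 0)
  refine eq_of_norm_sub_mul_norm_eq h₁ h₂ ?_ ?_
  · simpa using hratio 1
  · simpa using hratio (-1)

end

theorem stmt_5 :
    (∀ τ₁ τ₂ : ℂ, 0 < τ₁.im → 0 < τ₂.im → 0 ≤ dZ τ₁ τ₂) ∧
    (∀ τ₁ τ₂ : ℂ, 0 < τ₁.im → 0 < τ₂.im → dZ τ₁ τ₂ = dZ τ₂ τ₁) ∧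
    (∀ τ₁ τ₂ : ℂ, 0 < τ₁.im → 0 < τ₂.im → (dZ τ₁ τ₂ = 0 ↔ τ₁ = τ₂)) ∧
    (∀ τ₁ τ₂ τ₃ : ℂ, 0 < τ₁.im → 0 < τ₂.im → 0 < τ₃.im →
      dZ τ₁ τ₃ ≤ dZ τ₁ τ₂ + dZ τ₂ τ₃) :=
  ⟨fun _ _ => dZ_nonneg, fun _ _ => dZ_comm, fun _ _ => dZ_eq_zero_iff,
    fun _ _ _ => dZ_triangle⟩
end

section
/- The function d_ℤ(τ₁,τ₂) := sup_{s₁,s₂ ∈ ℤ} log( (|τ₁ − s₂||τ₂ − s₁|) / (|τ₂ − s₂||τ₁ − s₁|) ) extends to a metric on ℍ ∪ (ℝ \ ℤ): for τ₁,τ₂ ∈ ℍ ∪ (ℝ \ ℤ) the supremum is finite, symmetric, satisfies the triangle inequality, and d_ℤ(τ₁,τ₂) = 0 iff τ₁ = τ₂. -/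
/-- Membership in `ℍ ∪ (ℝ \ ℤ)`. -/
def memHZ (τ : ℂ) : Prop :=
  0 < τ.im ∨ (τ.im = 0 ∧ ∀ n : ℤ, τ.re ≠ (n : ℝ))

open Bornology Set

section Spread

variable {ι : Type*}

/-- For bounded `g` this is `sup g - inf g`. -/
noncomputable def spread (g : ι → ℝ) : ℝ := ⨆ p : ι × ι, (g p.2 - g p.1)

theorem bddAbove_range_sub {g : ι → ℝ} (hg : IsBounded (range g)) :
    BddAbove (range fun p : ι × ι => g p.2 - g p.1) := by
  obtain ⟨a, ha⟩ := hg.bddAbove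
  obtain ⟨b, hb⟩ := hg.bddBelow
  refine ⟨a - b, ?_⟩
  rintro _ ⟨p, rfl⟩
  exact sub_le_sub (ha (mem_range_self _)) (hb (mem_range_self _))

theorem sub_le_spread {g : ι → ℝ} (hg : IsBounded (range g)) (i j : ι) :
    g j - g i ≤ spread g :=
  le_ciSup (bddAbove_range_sub hg) (i, j)

theorem spread_le {g : ι → ℝ} {c : ℝ} (h : ∀ i j, g j - g i ≤ c) (hc : 0 ≤ c) :
    spread g ≤ c :=
  Real.iSup_le (fun p => h p.1 p.2) hc

theorem spread_nonneg (g : ι → ℝ) : 0 ≤ spread g := by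
  rcases isEmpty_or_nonempty ι with hι | ⟨⟨i⟩⟩
  · simp [spread]
  · exact Real.iSup_nonneg' ⟨(i, i), (sub_self _).ge⟩

theorem spread_neg (g : ι → ℝ) : spread (-g) = spread g := by
  rw [spread, ← (Equiv.prodComm ι ι).iSup_comp]
  simp only [spread, Pi.neg_apply, Equiv.prodComm_apply, Prod.fst_swap, Prod.snd_swap,
    neg_sub_neg]

theorem spread_add_le {g h : ι → ℝ} (hg : IsBounded (range g)) (hh : IsBounded (range h)) :
    spread (g + h) ≤ spread g + spread h :=
  spread_le (fun i j => by
    simpa only [Pi.add_apply, add_sub_add_comm] using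
      add_le_add (sub_le_spread hg i j) (sub_le_spread hh i j))
    (add_nonneg (spread_nonneg g) (spread_nonneg h))

theorem spread_eq_zero_iff {g : ι → ℝ} (hg : IsBounded (range g)) :
    spread g = 0 ↔ ∀ i j, g i = g j := by
  refine ⟨fun h0 i j => ?_, fun hc => ?_⟩
  · have := sub_le_spread hg i j
    have := sub_le_spread hg j i
    linarith
  · exact le_antisymm (spread_le (fun i j => by rw [hc j i, sub_self]) le_rfl)
      (spread_nonneg g)

end Spread

section LogNorm

variable {E : Type*} [SeminormedAddCommGroup E]

theorem log_norm_sub_log_norm_le {x y : E} (hx : 0 < ‖x‖) (hy : 0 < ‖y‖) :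
    Real.log ‖x‖ - Real.log ‖y‖ ≤ ‖x - y‖ / ‖y‖ :=
  calc Real.log ‖x‖ - Real.log ‖y‖ = Real.log (‖x‖ / ‖y‖) := (Real.log_div hx.ne' hy.ne').symm
    _ ≤ ‖x‖ / ‖y‖ - 1 := Real.log_le_sub_one_of_pos (div_pos hx hy)
    _ = (‖x‖ - ‖y‖) / ‖y‖ := by field_simp
    _ ≤ ‖x - y‖ / ‖y‖ := by gcongr; exact norm_sub_norm_le x y

theorem abs_log_norm_sub_log_norm_le {x y : E} {ε : ℝ} (hε : 0 < ε) (hx : ε ≤ ‖x‖)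
    (hy : ε ≤ ‖y‖) : |Real.log ‖x‖ - Real.log ‖y‖| ≤ ‖x - y‖ / ε := by
  have hx' := hε.trans_le hx
  have hy' := hε.trans_le hy
  rw [abs_le]
  constructor
  · calc -(‖x - y‖ / ε) = -(‖y - x‖ / ε) := by rw [norm_sub_rev]
      _ ≤ -(‖y - x‖ / ‖x‖) := by gcongr
      _ ≤ Real.log ‖x‖ - Real.log ‖y‖ := by linarith [log_norm_sub_log_norm_le hy' hx']
  · calc Real.log ‖x‖ - Real.log ‖y‖ ≤ ‖x - y‖ / ‖y‖ := log_norm_sub_log_norm_le hx' hy'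
      _ ≤ ‖x - y‖ / ε := by gcongr

end LogNorm

/-- The two Apollonius circles through `z` (for the pairs `0, 1` and `0, -1`) meet only in `z` and
its conjugate. -/
theorem Complex.eq_of_norm_mul_eq_of_im_nonneg {z w : ℂ} (hz : 0 ≤ z.im) (hw : 0 ≤ w.im)
    (h₁ : ‖z - 1‖ * ‖w‖ = ‖z‖ * ‖w - 1‖) (h₂ : ‖z + 1‖ * ‖w‖ = ‖z‖ * ‖w + 1‖) : z = w := by
  have sq₁ := congrArg (· ^ 2) h₁
  have sq₂ := congrArg (· ^ 2) h₂
  simp only [mul_pow, Complex.sq_norm, Complex.normSq_apply, Complex.sub_re, Complex.sub_im,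
    Complex.add_re, Complex.add_im, Complex.one_re, Complex.one_im] at sq₁ sq₂
  have hnorm : w.re ^ 2 + w.im ^ 2 = z.re ^ 2 + z.im ^ 2 := by linear_combination (sq₁ + sq₂) / 2
  have hre : z.re * (z.re ^ 2 + z.im ^ 2) = w.re * (z.re ^ 2 + z.im ^ 2) := by
    linear_combination (sq₂ - sq₁) / 4 - z.re * hnorm
  rcases eq_or_ne (z.re ^ 2 + z.im ^ 2) 0 with h0 | h0
  · have hz0 : z.re = 0 ∧ z.im = 0 := by
      constructor <;> nlinarith [sq_nonneg z.re, sq_nonneg z.im]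
    have hw0 : w.re = 0 ∧ w.im = 0 := by
      constructor <;> nlinarith [sq_nonneg w.re, sq_nonneg w.im]
    exact Complex.ext (hz0.1.trans hw0.1.symm) (hz0.2.trans hw0.2.symm)
  · have hx : z.re = w.re := mul_right_cancel₀ h0 hre
    have hy : z.im ^ 2 = w.im ^ 2 := by linear_combination -hnorm - (z.re + w.re) * hx
    exact Complex.ext hx ((sq_eq_sq₀ hz hw).mp hy)

namespace memHZ

variable {τ : ℂ}

theorem im_nonneg (h : memHZ τ) : 0 ≤ τ.im := by
  rcases h with h | ⟨h, _⟩
  · exact h.le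
  · exact h.ge

theorem exists_pos_le_norm_sub_intCast (h : memHZ τ) : ∃ ε > 0, ∀ s : ℤ, ε ≤ ‖τ - s‖ := by
  rcases h with him | ⟨-, hre⟩
  · refine ⟨τ.im, him, fun s => ?_⟩
    simpa [abs_of_pos him] using Complex.abs_im_le_norm (τ - s)
  · refine ⟨|τ.re - round τ.re|, abs_pos.mpr (sub_ne_zero.mpr (hre _)), fun s => ?_⟩
    calc |τ.re - round τ.re| ≤ |τ.re - s| := round_le τ.re s
      _ = |(τ - s).re| := by simp
      _ ≤ ‖τ - s‖ := Complex.abs_re_le_norm _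

theorem norm_sub_intCast_pos (h : memHZ τ) (s : ℤ) : 0 < ‖τ - s‖ := by
  obtain ⟨ε, hε, hle⟩ := h.exists_pos_le_norm_sub_intCast
  exact hε.trans_le (hle s)

end memHZ

noncomputable def logRatio (τ₁ τ₂ : ℂ) (s : ℤ) : ℝ :=
  Real.log ‖τ₁ - s‖ - Real.log ‖τ₂ - s‖

theorem logRatio_swap (τ₁ τ₂ : ℂ) : logRatio τ₂ τ₁ = -logRatio τ₁ τ₂ := by
  ext s
  simp only [logRatio, Pi.neg_apply, neg_sub]

theorem logRatio_add_logRatio (τ₁ τ₂ τ₃ : ℂ) :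
    logRatio τ₁ τ₂ + logRatio τ₂ τ₃ = logRatio τ₁ τ₃ := by
  ext s
  simp only [logRatio, Pi.add_apply, sub_add_sub_cancel]

theorem isBounded_range_logRatio {τ₁ τ₂ : ℂ} (h₁ : memHZ τ₁) (h₂ : memHZ τ₂) :
    IsBounded (range (logRatio τ₁ τ₂)) := by
  obtain ⟨ε₁, hε₁, hle₁⟩ := h₁.exists_pos_le_norm_sub_intCast
  obtain ⟨ε₂, hε₂, hle₂⟩ := h₂.exists_pos_le_norm_sub_intCast
  refine isBounded_iff_forall_norm_le.mpr ⟨‖τ₁ - τ₂‖ / min ε₁ ε₂, ?_⟩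
  rintro _ ⟨s, rfl⟩
  simpa only [Real.norm_eq_abs, logRatio, sub_sub_sub_cancel_right] using
    abs_log_norm_sub_log_norm_le (lt_min hε₁ hε₂) ((min_le_left _ _).trans (hle₁ s))
      ((min_le_right _ _).trans (hle₂ s))

theorem log_crossRatio_eq {τ₁ τ₂ : ℂ} (h₁ : memHZ τ₁) (h₂ : memHZ τ₂) (s₁ s₂ : ℤ) :
    Real.log ((‖τ₁ - (s₂ : ℂ)‖ * ‖τ₂ - (s₁ : ℂ)‖) / (‖τ₂ - (s₂ : ℂ)‖ * ‖τ₁ - (s₁ : ℂ)‖)) =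
      logRatio τ₁ τ₂ s₂ - logRatio τ₁ τ₂ s₁ := by
  have a₁ := h₁.norm_sub_intCast_pos s₁
  have a₂ := h₁.norm_sub_intCast_pos s₂
  have b₁ := h₂.norm_sub_intCast_pos s₁
  have b₂ := h₂.norm_sub_intCast_pos s₂
  rw [Real.log_div (by positivity) (by positivity), Real.log_mul a₂.ne' b₁.ne',
    Real.log_mul b₂.ne' a₁.ne', logRatio, logRatio]
  ring

theorem dZ_eq_spread {τ₁ τ₂ : ℂ} (h₁ : memHZ τ₁) (h₂ : memHZ τ₂) :
    dZ τ₁ τ₂ = spread (logRatio τ₁ τ₂) := by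
  simp only [dZ, log_crossRatio_eq h₁ h₂]
  exact (ciSup_prod (bddAbove_range_sub (isBounded_range_logRatio h₁ h₂))).symm

theorem norm_mul_eq_of_logRatio_eq {τ₁ τ₂ : ℂ} (h₁ : memHZ τ₁) (h₂ : memHZ τ₂) {s t : ℤ}
    (h : logRatio τ₁ τ₂ s = logRatio τ₁ τ₂ t) :
    ‖τ₁ - s‖ * ‖τ₂ - t‖ = ‖τ₁ - t‖ * ‖τ₂ - s‖ := by
  have a₁ := h₁.norm_sub_intCast_pos s
  have a₂ := h₁.norm_sub_intCast_pos t
  have b₁ := h₂.norm_sub_intCast_pos s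
  have b₂ := h₂.norm_sub_intCast_pos t
  refine Real.log_injOn_pos (mem_Ioi.mpr (by positivity)) (mem_Ioi.mpr (by positivity)) ?_
  rw [Real.log_mul a₁.ne' b₂.ne', Real.log_mul a₂.ne' b₁.ne']
  unfold logRatio at h
  linarith

theorem eq_of_logRatio_eq {τ₁ τ₂ : ℂ} (h₁ : memHZ τ₁) (h₂ : memHZ τ₂)
    (h : ∀ s t, logRatio τ₁ τ₂ s = logRatio τ₁ τ₂ t) : τ₁ = τ₂ := by
  have e₁ := norm_mul_eq_of_logRatio_eq h₁ h₂ (h 1 0)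
  have e₂ := norm_mul_eq_of_logRatio_eq h₁ h₂ (h (-1) 0)
  push_cast at e₁ e₂
  simp only [sub_zero, sub_neg_eq_add] at e₁ e₂
  exact Complex.eq_of_norm_mul_eq_of_im_nonneg h₁.im_nonneg h₂.im_nonneg e₁ e₂

theorem stmt_6 :
    (∀ τ₁ τ₂ : ℂ, memHZ τ₁ → memHZ τ₂ →
      BddAbove (Set.range fun p : ℤ × ℤ =>
        Real.log ((‖τ₁ - (p.2 : ℂ)‖ * ‖τ₂ - (p.1 : ℂ)‖) /
          (‖τ₂ - (p.2 : ℂ)‖ * ‖τ₁ - (p.1 : ℂ)‖)))) ∧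
    (∀ τ₁ τ₂ : ℂ, memHZ τ₁ → memHZ τ₂ → 0 ≤ dZ τ₁ τ₂) ∧
    (∀ τ₁ τ₂ : ℂ, memHZ τ₁ → memHZ τ₂ → dZ τ₁ τ₂ = dZ τ₂ τ₁) ∧
    (∀ τ₁ τ₂ τ₃ : ℂ, memHZ τ₁ → memHZ τ₂ → memHZ τ₃ →
      dZ τ₁ τ₃ ≤ dZ τ₁ τ₂ + dZ τ₂ τ₃) ∧
    (∀ τ₁ τ₂ : ℂ, memHZ τ₁ → memHZ τ₂ → (dZ τ₁ τ₂ = 0 ↔ τ₁ = τ₂)) := by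
  refine ⟨fun τ₁ τ₂ h₁ h₂ => ?_, fun τ₁ τ₂ h₁ h₂ => ?_, fun τ₁ τ₂ h₁ h₂ => ?_,
    fun τ₁ τ₂ τ₃ h₁ h₂ h₃ => ?_, fun τ₁ τ₂ h₁ h₂ => ?_⟩
  · simpa only [log_crossRatio_eq h₁ h₂] using
      bddAbove_range_sub (isBounded_range_logRatio h₁ h₂)
  · rw [dZ_eq_spread h₁ h₂]
    exact spread_nonneg _
  · rw [dZ_eq_spread h₁ h₂, dZ_eq_spread h₂ h₁, logRatio_swap, spread_neg]
  · rw [dZ_eq_spread h₁ h₃, dZ_eq_spread h₁ h₂, dZ_eq_spread h₂ h₃,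
      ← logRatio_add_logRatio τ₁ τ₂ τ₃]
    exact spread_add_le (isBounded_range_logRatio h₁ h₂) (isBounded_range_logRatio h₂ h₃)
  · rw [dZ_eq_spread h₁ h₂, spread_eq_zero_iff (isBounded_range_logRatio h₁ h₂)]
    refine ⟨eq_of_logRatio_eq h₁ h₂, ?_⟩
    rintro rfl s t
    simp only [logRatio, sub_self]
end

section
/- The metric space (ℍ ∪ (ℝ\ℤ), d_ℤ) is not uniquely geodesic: there exist two points joined by two distinct geodesics. Consequently it is not a CAT(0) space. -/
open Real Set
open Complex (normSq)

theorem ciSup_eq_apply_of_forall_le {ι α : Type*} [ConditionallyCompleteLattice α] {f : ι → α}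
    {a : ι} (h : ∀ i, f i ≤ f a) : ⨆ i, f i = f a :=
  IsGreatest.csSup_eq ⟨⟨a, rfl⟩, forall_mem_range.2 h⟩

theorem ciSup_ciSup_log_div_eq {ι : Type*} {f : ι → ℝ} (hf : ∀ i, 0 < f i) {a b : ι}
    (ha : ∀ i, f i ≤ f a) (hb : ∀ i, f b ≤ f i) :
    ⨆ i, ⨆ j, log (f i / f j) = log (f a / f b) := by
  have inner (i : ι) : ⨆ j, log (f i / f j) = log (f i / f b) :=
    ciSup_eq_apply_of_forall_le fun j ↦ log_le_log (div_pos (hf i) (hf j))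
      (div_le_div_of_nonneg_left (hf i).le (hf b) (hb j))
  simp_rw [inner]
  exact ciSup_eq_apply_of_forall_le fun i ↦ log_le_log (div_pos (hf i) (hf b))
    (div_le_div_of_nonneg_right (ha i) (hf b).le)

theorem memHZ_of_im_nonneg {τ : ℂ} (him : 0 ≤ τ.im) (hre₀ : 0 < τ.re) (hre₁ : τ.re < 1) :
    memHZ τ := by
  rcases him.lt_or_eq with him | him
  · exact Or.inl him
  · refine Or.inr ⟨him.symm, fun n hn ↦ ?_⟩
    rw [hn] at hre₀ hre₁
    have : (0 : ℤ) < n := mod_cast hre₀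
    have : n < 1 := mod_cast hre₁
    omega

theorem memHZ.norm_sub_intCast_pos_s13 {τ : ℂ} (h : memHZ τ) (n : ℤ) : 0 < ‖τ - n‖ := by
  rw [norm_pos_iff, sub_ne_zero]
  rintro rfl
  rcases h with h | ⟨-, h⟩
  · simp at h
  · exact h n (by simp)

noncomputable def distRatio (τ₁ τ₂ : ℂ) (n : ℤ) : ℝ := ‖τ₂ - n‖ / ‖τ₁ - n‖

theorem dZ_eq_iSup_log_div (τ₁ τ₂ : ℂ) :
    dZ τ₁ τ₂ = ⨆ s₁ : ℤ, ⨆ s₂ : ℤ, log (distRatio τ₁ τ₂ s₁ / distRatio τ₁ τ₂ s₂) := by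
  simp only [dZ, distRatio, div_div_div_eq]
  congr! 4
  ac_rfl

theorem dZ_eq_log_distRatio_div {τ₁ τ₂ : ℂ} (h₁ : memHZ τ₁) (h₂ : memHZ τ₂) {a b : ℤ}
    (ha : ∀ n, distRatio τ₁ τ₂ n ≤ distRatio τ₁ τ₂ a)
    (hb : ∀ n, distRatio τ₁ τ₂ b ≤ distRatio τ₁ τ₂ n) :
    dZ τ₁ τ₂ = log (distRatio τ₁ τ₂ a / distRatio τ₁ τ₂ b) :=
  (dZ_eq_iSup_log_div τ₁ τ₂).trans <| ciSup_ciSup_log_div_eq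
    (fun n ↦ div_pos (h₂.norm_sub_intCast_pos_s13 n) (h₁.norm_sub_intCast_pos_s13 n)) ha hb

noncomputable def apollonius (τ : ℂ) : ℝ := ‖τ‖ / ‖τ - 1‖

def ExtremalAtZeroOne (q p : ℂ) : Prop :=
  ∀ n : ℤ, distRatio q p 1 ≤ distRatio q p n ∧ distRatio q p n ≤ distRatio q p 0

theorem ExtremalAtZeroOne.dZ_eq {q p : ℂ} (hq : memHZ q) (hp : memHZ p)
    (h : ExtremalAtZeroOne q p) : dZ q p = log (apollonius p / apollonius q) := by
  rw [dZ_eq_log_distRatio_div hq hp (fun n ↦ (h n).2) (fun n ↦ (h n).1)]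
  simp only [distRatio, apollonius, Int.cast_zero, Int.cast_one, sub_zero, div_div_div_eq]
  congr 1
  ring

theorem ExtremalAtZeroOne.dZ_symm_eq {q p : ℂ} (hq : memHZ q) (hp : memHZ p)
    (h : ExtremalAtZeroOne q p) : dZ p q = log (apollonius p / apollonius q) := by
  have hpos (n : ℤ) : 0 < distRatio q p n :=
    div_pos (hp.norm_sub_intCast_pos_s13 n) (hq.norm_sub_intCast_pos_s13 n)
  have hinv (n : ℤ) : distRatio p q n = (distRatio q p n)⁻¹ := (inv_div _ _).symm
  rw [dZ_eq_log_distRatio_div hp hq (a := 1) (b := 0)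
    (fun n ↦ by simpa only [hinv] using inv_anti₀ (hpos 1) (h n).1)
    (fun n ↦ by simpa only [hinv] using inv_anti₀ (hpos n) (h n).2)]
  simp only [distRatio, apollonius, Int.cast_zero, Int.cast_one, sub_zero, div_div_div_eq]
  congr 1
  ring

theorem abs_intCast_le_sq (n : ℤ) : |(n : ℝ)| ≤ (n : ℝ) ^ 2 := by
  have := Int.natAbs_le_self_sq n
  rw [Int.natCast_natAbs] at this
  exact_mod_cast this

theorem normSq_sub_intCast (z : ℂ) (n : ℤ) :
    normSq (z - n) = normSq z - 2 * n * z.re + n ^ 2 := by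
  simp only [Complex.normSq_apply, Complex.sub_re, Complex.intCast_re, Complex.sub_im,
    Complex.intCast_im, sub_zero]
  ring

theorem norm_sub_intCast_mul_le {p q : ℂ}
    (h : |2 * (p.re * normSq q - q.re * normSq p)| ≤ normSq p - normSq q) (n : ℤ) :
    ‖p - n‖ * ‖q‖ ≤ ‖p‖ * ‖q - n‖ := by
  have hA : 0 ≤ normSq p - normSq q := (abs_nonneg _).trans h
  -- the squared difference is `n² A + n B` with `|B| ≤ A`, and `|n| ≤ n²` on `ℤ`
  have hsq : normSq (p - n) * normSq q ≤ normSq p * normSq (q - n) := by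
    have hnB : |(n : ℝ) * (2 * (p.re * normSq q - q.re * normSq p))|
        ≤ (n : ℝ) ^ 2 * (normSq p - normSq q) := by
      rw [abs_mul]
      exact (mul_le_mul_of_nonneg_left h (abs_nonneg _)).trans
        (mul_le_mul_of_nonneg_right (abs_intCast_le_sq n) hA)
    rw [normSq_sub_intCast, normSq_sub_intCast]
    linarith [neg_abs_le ((n : ℝ) * (2 * (p.re * normSq q - q.re * normSq p)))]
  rw [← pow_le_pow_iff_left₀ (by positivity) (by positivity) two_ne_zero, mul_pow, mul_pow]
  simpa only [Complex.sq_norm] using hsq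

theorem extremalAtZeroOne_of_abs_le {q p : ℂ} (hq : memHZ q)
    (h₀ : |2 * (p.re * normSq q - q.re * normSq p)| ≤ normSq p - normSq q)
    (h₁ : |2 * ((1 - q).re * normSq (1 - p) - (1 - p).re * normSq (1 - q))| ≤
      normSq (1 - q) - normSq (1 - p)) :
    ExtremalAtZeroOne q p := by
  intro n
  constructor
  · rw [distRatio, distRatio, div_le_div_iff₀ (hq.norm_sub_intCast_pos_s13 1)
      (hq.norm_sub_intCast_pos_s13 n)]
    -- `z ↦ 1 - z` exchanges the roles of `0` and `1`
    have h := norm_sub_intCast_mul_le h₁ (1 - n)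
    rw [show (1 - q - ((1 - n : ℤ) : ℂ)) = -(q - n) by push_cast; ring,
      show (1 - p - ((1 - n : ℤ) : ℂ)) = -(p - n) by push_cast; ring,
      norm_neg, norm_neg, norm_sub_rev 1 q, norm_sub_rev 1 p] at h
    rw [Int.cast_one]
    linarith
  · rw [distRatio, distRatio, div_le_div_iff₀ (hq.norm_sub_intCast_pos_s13 n)
      (hq.norm_sub_intCast_pos_s13 0)]
    simpa using norm_sub_intCast_mul_le h₀ n

structure IsApolloniusParam (P : ℝ → ℂ) (J : Set ℝ) : Prop where
  mem : ∀ r ∈ J, memHZ (P r)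
  apollonius_eq : ∀ r ∈ J, apollonius (P r) = r
  extremal : ∀ r₁ ∈ J, ∀ r₂ ∈ J, r₁ ≤ r₂ → ExtremalAtZeroOne (P r₁) (P r₂)

namespace IsApolloniusParam

variable {P : ℝ → ℂ} {J : Set ℝ}

theorem mono {J' : Set ℝ} (hP : IsApolloniusParam P J) (hJ : J' ⊆ J) :
    IsApolloniusParam P J' where
  mem r hr := hP.mem r (hJ hr)
  apollonius_eq r hr := hP.apollonius_eq r (hJ hr)
  extremal r₁ h₁ r₂ h₂ := hP.extremal r₁ (hJ h₁) r₂ (hJ h₂)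

theorem pos (hP : IsApolloniusParam P J) {r : ℝ} (hr : r ∈ J) : 0 < r := by
  rw [← hP.apollonius_eq r hr, apollonius]
  simpa using div_pos ((hP.mem r hr).norm_sub_intCast_pos_s13 0)
    ((hP.mem r hr).norm_sub_intCast_pos_s13 1)

theorem dZ_eq (hP : IsApolloniusParam P J) {r₁ r₂ : ℝ} (h₁ : r₁ ∈ J) (h₂ : r₂ ∈ J) :
    dZ (P r₁) (P r₂) = |log r₁ - log r₂| := by
  rcases le_total r₁ r₂ with h | h
  · rw [(hP.extremal r₁ h₁ r₂ h₂ h).dZ_eq (hP.mem r₁ h₁) (hP.mem r₂ h₂),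
      hP.apollonius_eq r₁ h₁, hP.apollonius_eq r₂ h₂, log_div (hP.pos h₂).ne' (hP.pos h₁).ne',
      abs_sub_comm, abs_of_nonneg (sub_nonneg.2 (log_le_log (hP.pos h₁) h))]
  · rw [(hP.extremal r₂ h₂ r₁ h₁ h).dZ_symm_eq (hP.mem r₂ h₂) (hP.mem r₁ h₁),
      hP.apollonius_eq r₁ h₁, hP.apollonius_eq r₂ h₂, log_div (hP.pos h₁).ne' (hP.pos h₂).ne',
      abs_of_nonneg (sub_nonneg.2 (log_le_log (hP.pos h₂) h))]

end IsApolloniusParam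

def IsGeodesicPath (γ : ℝ → ℂ) (x y : ℂ) : Prop :=
  γ 0 = x ∧ γ 1 = y ∧ (∀ t ∈ Icc (0 : ℝ) 1, memHZ (γ t)) ∧
    ∀ s ∈ Icc (0 : ℝ) 1, ∀ t ∈ Icc (0 : ℝ) 1, dZ (γ s) (γ t) = |s - t| * dZ x y

theorem IsApolloniusParam.isGeodesicPath {P : ℝ → ℂ}
    (hP : IsApolloniusParam P (Icc (1 / 2) 2)) :
    IsGeodesicPath (fun t ↦ P (4 ^ t / 2)) (P (1 / 2)) (P 2) := by
  have hmem (t : ℝ) (ht : t ∈ Icc (0 : ℝ) 1) : (4 : ℝ) ^ t / 2 ∈ Icc (1 / 2 : ℝ) 2 := by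
    have h₀ := one_le_rpow (by norm_num : (1 : ℝ) ≤ 4) ht.1
    have h₁ := rpow_le_rpow_of_exponent_le (by norm_num : (1 : ℝ) ≤ 4) ht.2
    rw [rpow_one] at h₁
    constructor <;> linarith
  have hlog (t : ℝ) : log ((4 : ℝ) ^ t / 2) = t * log 4 - log 2 := by
    rw [log_div (by positivity) two_ne_zero, log_rpow (by norm_num)]
  have hdist : ∀ s ∈ Icc (0 : ℝ) 1, ∀ t ∈ Icc (0 : ℝ) 1,
      dZ (P (4 ^ s / 2)) (P (4 ^ t / 2)) = |s - t| * log 4 := by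
    intro s hs t ht
    rw [hP.dZ_eq (hmem s hs) (hmem t ht), hlog, hlog,
      show s * log 4 - log 2 - (t * log 4 - log 2) = (s - t) * log 4 by ring, abs_mul,
      abs_of_pos (log_pos (by norm_num : (1 : ℝ) < 4))]
  have hend₀ : (4 : ℝ) ^ (0 : ℝ) / 2 = 1 / 2 := by norm_num
  have hend₁ : (4 : ℝ) ^ (1 : ℝ) / 2 = 2 := by norm_num
  have hxy := hdist 0 (by norm_num) 1 (by norm_num)
  rw [hend₀, hend₁] at hxy
  refine ⟨by simp only [hend₀], by simp only [hend₁], fun t ht ↦ hP.mem _ (hmem t ht),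
    fun s hs t ht ↦ ?_⟩
  rw [hdist s hs t ht, hxy]
  norm_num

noncomputable def realPoint (r : ℝ) : ℂ := ((r / (1 + r) : ℝ) : ℂ)

theorem extremalAtZeroOne_ofReal {a b : ℝ} (ha : 0 < a) (hab : a ≤ b) (hb : b < 1) :
    ExtremalAtZeroOne a b := by
  have hcrit {a b : ℝ} (ha : 0 ≤ a) (hab : a ≤ b) (hb : b ≤ 1) :
      |2 * (b * (a * a) - a * (b * b))| ≤ b * b - a * a := by
    rw [abs_of_nonpos (by nlinarith [mul_nonneg ha (sub_nonneg.2 hab)])]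
    nlinarith [mul_nonneg (sub_nonneg.2 hab) (add_nonneg (mul_nonneg ha (sub_nonneg.2 hb))
      (mul_nonneg (ha.trans hab) (by linarith : 0 ≤ 1 - a)))]
  refine extremalAtZeroOne_of_abs_le
    (memHZ_of_im_nonneg (by simp) (by simpa) (by simp; linarith)) ?_ ?_
  · simpa using hcrit ha.le hab hb.le
  · rw [← Complex.ofReal_one, ← Complex.ofReal_sub, ← Complex.ofReal_sub]
    simpa only [Complex.normSq_ofReal, Complex.ofReal_re] using
      hcrit (by linarith) (by linarith) (by linarith)

theorem isApolloniusParam_realPoint : IsApolloniusParam realPoint (Ioi 0) where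
  mem r hr := by
    have hr : 0 < r := hr
    refine memHZ_of_im_nonneg (by rw [realPoint, Complex.ofReal_im]) ?_ ?_ <;>
      simp only [realPoint, Complex.ofReal_re]
    · positivity
    · rw [div_lt_one (by linarith)]; linarith
  apollonius_eq r hr := by
    have hr : 0 < r := hr
    have h₁ : r / (1 + r) - 1 = -(1 + r)⁻¹ := by field_simp; ring
    rw [apollonius, realPoint, ← Complex.ofReal_one, ← Complex.ofReal_sub, h₁,
      Complex.norm_real, Complex.norm_real, norm_neg, norm_div, norm_inv,
      Real.norm_of_nonneg hr.le, Real.norm_of_nonneg (by linarith : 0 ≤ 1 + r)]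
    field_simp
  extremal r₁ h₁ r₂ h₂ h := by
    have h₁ : 0 < r₁ := h₁
    have h₂ : 0 < r₂ := h₂
    refine extremalAtZeroOne_ofReal (by positivity) ?_ ?_
    · rw [div_le_div_iff₀ (by linarith) (by linarith)]; linarith
    · rw [div_lt_one (by linarith)]; linarith

noncomputable def circlePoint (u : ℝ) : ℂ := ⟨1 / 2 + u, √(1 / 36 - u ^ 2)⟩

theorem normSq_circlePoint {u : ℝ} (hu : u ∈ Icc (-(1 / 6) : ℝ) (1 / 6)) :
    normSq (circlePoint u) = 5 / 18 + u := by
  have h := sq_sqrt (show 0 ≤ 1 / 36 - u ^ 2 by nlinarith [hu.1, hu.2])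
  rw [circlePoint, Complex.normSq_mk]
  linear_combination h

theorem normSq_one_sub_circlePoint {u : ℝ} (hu : u ∈ Icc (-(1 / 6) : ℝ) (1 / 6)) :
    normSq (1 - circlePoint u) = 5 / 18 - u := by
  have h := sq_sqrt (show 0 ≤ 1 / 36 - u ^ 2 by nlinarith [hu.1, hu.2])
  rw [Complex.normSq_apply]
  simp only [circlePoint, Complex.sub_re, Complex.sub_im, Complex.one_re, Complex.one_im]
  linear_combination h

theorem memHZ_circlePoint {u : ℝ} (hu : u ∈ Icc (-(1 / 6) : ℝ) (1 / 6)) :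
    memHZ (circlePoint u) :=
  memHZ_of_im_nonneg (sqrt_nonneg _) (by simp only [circlePoint]; linarith [hu.1])
    (by simp only [circlePoint]; linarith [hu.2])

theorem extremalAtZeroOne_circlePoint {u₁ u₂ : ℝ} (h₁ : u₁ ∈ Icc (-(1 / 6) : ℝ) (1 / 6))
    (h₂ : u₂ ∈ Icc (-(1 / 6) : ℝ) (1 / 6)) (h : u₁ ≤ u₂) :
    ExtremalAtZeroOne (circlePoint u₁) (circlePoint u₂) := by
  refine extremalAtZeroOne_of_abs_le (memHZ_circlePoint h₁) ?_ ?_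
  · rw [normSq_circlePoint h₁, normSq_circlePoint h₂, abs_le]
    simp only [circlePoint]
    constructor <;> linarith
  · rw [normSq_one_sub_circlePoint h₁, normSq_one_sub_circlePoint h₂, abs_le]
    simp only [circlePoint, Complex.sub_re, Complex.one_re]
    constructor <;> linarith

-- On the circle `|z - 1/2| = 1/6`, `|z|² = 5/18 + u` and `|z - 1|² = 5/18 - u` at `re z = 1/2 + u`;
-- this offset solves `(5/18 + u) / (5/18 - u) = r²`, so that `apollonius (arcPoint r) = r`.
noncomputable def arcOffset (r : ℝ) : ℝ := 5 / 18 * (r ^ 2 - 1) / (r ^ 2 + 1)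

noncomputable def arcPoint (r : ℝ) : ℂ := circlePoint (arcOffset r)

theorem arcOffset_mem_Icc {r : ℝ} (hr : r ∈ Icc (1 / 2 : ℝ) 2) :
    arcOffset r ∈ Icc (-(1 / 6) : ℝ) (1 / 6) := by
  obtain ⟨h₁, h₂⟩ := hr
  rw [arcOffset, mem_Icc, le_div_iff₀ (by positivity), div_le_iff₀ (by positivity)]
  constructor <;> nlinarith

theorem arcOffset_le_arcOffset {r₁ r₂ : ℝ} (h₁ : 0 ≤ r₁) (h : r₁ ≤ r₂) :
    arcOffset r₁ ≤ arcOffset r₂ := by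
  rw [arcOffset, arcOffset, div_le_div_iff₀ (by positivity) (by positivity)]
  nlinarith [mul_le_mul h h h₁ (h₁.trans h)]

theorem isApolloniusParam_arcPoint : IsApolloniusParam arcPoint (Icc (1 / 2) 2) where
  mem r hr := memHZ_circlePoint (arcOffset_mem_Icc hr)
  apollonius_eq r hr := by
    have hr₀ : 0 < r := by linarith [hr.1]
    rw [apollonius, norm_sub_rev, ← sq_eq_sq₀ (by positivity) hr₀.le, div_pow,
      Complex.sq_norm, Complex.sq_norm, arcPoint,
      normSq_circlePoint (arcOffset_mem_Icc hr),
      normSq_one_sub_circlePoint (arcOffset_mem_Icc hr), arcOffset]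
    field_simp
    ring
  extremal r₁ h₁ r₂ h₂ h := extremalAtZeroOne_circlePoint (arcOffset_mem_Icc h₁)
    (arcOffset_mem_Icc h₂) (arcOffset_le_arcOffset (by linarith [h₁.1]) h)

theorem realPoint_half : realPoint (1 / 2) = 1 / 3 := by
  norm_num [realPoint]

theorem realPoint_two : realPoint 2 = 2 / 3 := by
  norm_num [realPoint]

theorem arcPoint_half : arcPoint (1 / 2) = 1 / 3 := by
  apply Complex.ext <;> norm_num [arcPoint, arcOffset, circlePoint]

theorem arcPoint_two : arcPoint 2 = 2 / 3 := by
  apply Complex.ext <;> norm_num [arcPoint, arcOffset, circlePoint]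

theorem realPoint_one_ne_arcPoint_one : realPoint 1 ≠ arcPoint 1 := by
  intro h
  have him := congrArg Complex.im h
  norm_num [realPoint, arcPoint, arcOffset, circlePoint] at him

/-- The space `(ℍ ∪ (ℝ \ ℤ), d_ℤ)` is not uniquely geodesic: there are two
distinct points joined by two geodesics which differ at some parameter. -/
theorem stmt_13 :
    ∃ x y : ℂ, memHZ x ∧ memHZ y ∧ x ≠ y ∧
      ∃ γ₁ γ₂ : ℝ → ℂ,
        (γ₁ 0 = x ∧ γ₁ 1 = y ∧ (∀ t ∈ Set.Icc (0:ℝ) 1, memHZ (γ₁ t)) ∧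
          ∀ s ∈ Set.Icc (0:ℝ) 1, ∀ t ∈ Set.Icc (0:ℝ) 1,
            dZ (γ₁ s) (γ₁ t) = |s - t| * dZ x y) ∧
        (γ₂ 0 = x ∧ γ₂ 1 = y ∧ (∀ t ∈ Set.Icc (0:ℝ) 1, memHZ (γ₂ t)) ∧
          ∀ s ∈ Set.Icc (0:ℝ) 1, ∀ t ∈ Set.Icc (0:ℝ) 1,
            dZ (γ₂ s) (γ₂ t) = |s - t| * dZ x y) ∧
        ∃ t ∈ Set.Icc (0:ℝ) 1, γ₁ t ≠ γ₂ t := by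
  have hreal := (isApolloniusParam_realPoint.mono
    fun r hr ↦ (by norm_num : (0 : ℝ) < 1 / 2).trans_le hr.1).isGeodesicPath
  have harc := isApolloniusParam_arcPoint.isGeodesicPath
  rw [realPoint_half, realPoint_two] at hreal
  rw [arcPoint_half, arcPoint_two] at harc
  have hmid : (4 : ℝ) ^ (1 / 2 : ℝ) / 2 = 1 := by
    rw [← sqrt_eq_rpow, show (4 : ℝ) = 2 ^ 2 by norm_num, sqrt_sq zero_le_two]
    norm_num
  refine ⟨1 / 3, 2 / 3, memHZ_of_im_nonneg (by simp) (by simp) (by norm_num),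
    memHZ_of_im_nonneg (by simp) (by simp) (by norm_num), by norm_num,
    fun t ↦ realPoint (4 ^ t / 2), fun t ↦ arcPoint (4 ^ t / 2), hreal, harc,
    1 / 2, by norm_num, ?_⟩
  simpa only [hmid] using realPoint_one_ne_arcPoint_one
end
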